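/- Let Q(x) = ∫ₓ^∞ (1/√(2π)) e^{−t²/2} dt and fix ω̂ ∈ ℝ. With a, b, c defined by a(u) = max{ e^{−u²/2} / (√(2π) Q(u)), u }, b(u) = (1/(√(2π) a(u))) · e^{a(u)u − u²/2}, c(u) = Q(u) − b(u) e^{−a(u)u}, one has for every ω ∈ ℝ the lower bound Q(ω) ≥ 1 − b(−ω̂) e^{a(−ω̂)ω} − c(−ω̂), with equality at ω = ω̂. -/

import Mathlib

/-- The Gaussian Q-function `Q(x) = ∫ₓ^∞ (1/√(2π)) e^{−t²/2} dt`. -/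
noncomputable def gaussianQ (x : ℝ) : ℝ :=
  ∫ t in Set.Ioi x, (Real.sqrt (2 * Real.pi))⁻¹ * Real.exp (-t ^ 2 / 2)

/-- `a(u) = max{ e^{−u²/2} / (√(2π) Q(u)), u }`. -/
noncomputable def aQ (u : ℝ) : ℝ :=
  max (Real.exp (-u ^ 2 / 2) / (Real.sqrt (2 * Real.pi) * gaussianQ u)) u

/-- `b(u) = (1/(√(2π) a(u))) · e^{a(u)·u − u²/2}`. -/
noncomputable def bQ (u : ℝ) : ℝ :=
  (Real.sqrt (2 * Real.pi) * aQ u)⁻¹ * Real.exp (aQ u * u - u ^ 2 / 2)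

/-- `c(u) = Q(u) − b(u) e^{−a(u)·u}`. -/
noncomputable def cQ (u : ℝ) : ℝ := gaussianQ u - bQ u * Real.exp (-aQ u * u)

/-!
Reflect the upper bound `Q(ω) ≤ b(u) e^{-a(u) ω} + c(u)` (taken at `u = -ω̂` and `-ω`) through
`Q(ω) = 1 - Q(-ω)`; equality at `ω̂` is the definition of `c`.
For the upper bound write `a = a(u)`, `b = b(u)`, `c = c(u)`. Then
`b e^{-aω} + c - Q(ω) = c + ∫_ω^∞ g` with `g(t) = a b e^{-at} - φ(t) = φ(t) (e^{(t-u)(t-(2a-u))/2} - 1)`.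
Since `u ≤ a`, `g` is nonnegative up to `u`, nonpositive on `[u, 2a - u]` and nonnegative beyond,
so `∫_ω^∞ g ≥ min (∫_u^∞ g) 0 = min (-c) 0`; finally `c ≥ 0` because `a ≥ e^{-u²/2} / (√(2π) Q(u))`.
-/

open Set MeasureTheory ProbabilityTheory Real

lemma gaussianPDFReal_zero_one (t : ℝ) :
    gaussianPDFReal 0 1 t = (√(2 * π))⁻¹ * exp (-t ^ 2 / 2) := by
  simp [gaussianPDFReal]

lemma gaussianQ_eq_setIntegral_gaussianPDFReal (x : ℝ) :
    gaussianQ x = ∫ t in Ioi x, gaussianPDFReal 0 1 t := by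
  simp only [gaussianQ, gaussianPDFReal_zero_one]

lemma gaussianQ_pos (x : ℝ) : 0 < gaussianQ x := by
  have hsupp : Function.support (gaussianPDFReal 0 1) = univ :=
    Function.support_eq_univ fun t => (gaussianPDFReal_pos 0 1 t one_ne_zero).ne'
  rw [gaussianQ_eq_setIntegral_gaussianPDFReal, setIntegral_pos_iff_support_of_nonneg_ae
    (ae_of_all _ fun t => (gaussianPDFReal_pos 0 1 t one_ne_zero).le)
    (integrable_gaussianPDFReal 0 1).integrableOn, hsupp, univ_inter]
  simp

lemma gaussianQ_add_gaussianQ_neg (x : ℝ) : gaussianQ x + gaussianQ (-x) = 1 := by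
  have hneg : gaussianQ (-x) = ∫ t in Iic x, gaussianPDFReal 0 1 t := by
    simp only [gaussianQ_eq_setIntegral_gaussianPDFReal, ← integral_comp_neg_Iic,
      gaussianPDFReal_zero_one, even_two.neg_pow]
  rw [hneg, gaussianQ_eq_setIntegral_gaussianPDFReal, add_comm,
    intervalIntegral.integral_Iic_add_Ioi (integrable_gaussianPDFReal 0 1).integrableOn
      (integrable_gaussianPDFReal 0 1).integrableOn,
    integral_gaussianPDFReal_eq_one 0 one_ne_zero]

lemma integral_Ioi_exp_neg_mul {a : ℝ} (ha : 0 < a) (x : ℝ) :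
    ∫ t in Ioi x, exp (-a * t) = exp (-a * x) / a := by
  rw [integral_exp_mul_Ioi (neg_neg_of_pos ha), neg_div_neg_eq]

lemma min_setIntegral_Ioi_le_setIntegral_Ioi {g : ℝ → ℝ} {u v : ℝ}
    (hg : ∀ x, IntegrableOn g (Ioi x)) (h_left : ∀ t ≤ u, 0 ≤ g t)
    (h_mid : ∀ t ∈ Icc u v, g t ≤ 0) (h_right : ∀ t ≥ v, 0 ≤ g t) (ω : ℝ) :
    min (∫ t in Ioi u, g t) 0 ≤ ∫ t in Ioi ω, g t := by
  rcases le_total ω u with hωu | huω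
  · have : 0 ≤ ∫ t in ω..u, g t :=
      intervalIntegral.integral_nonneg hωu fun t ht => h_left t ht.2
    rw [← intervalIntegral.integral_interval_add_Ioi (hg ω) (hg u)]
    exact (min_le_left _ _).trans (le_add_of_nonneg_left this)
  rcases le_total ω v with hωv | hvω
  · have : ∫ t in u..ω, g t ≤ 0 := by
      simpa using intervalIntegral.integral_mono_on huω
        ((intervalIntegrable_iff_integrableOn_Ioc_of_le huω).2
          ((hg u).mono_set Ioc_subset_Ioi_self))
        intervalIntegrable_const fun t ht => h_mid t ⟨ht.1, ht.2.trans hωv⟩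
    rw [← intervalIntegral.integral_interval_add_Ioi (hg u) (hg ω)]
    exact (min_le_left _ _).trans (add_le_of_nonpos_left this)
  · exact (min_le_right _ _).trans
      (setIntegral_nonneg measurableSet_Ioi fun t ht => h_right t (hvω.trans ht.le))

lemma aQ_pos (u : ℝ) : 0 < aQ u :=
  lt_max_of_lt_left (div_pos (exp_pos _) (mul_pos (by positivity) (gaussianQ_pos u)))

lemma le_aQ (u : ℝ) : u ≤ aQ u := le_max_right _ _

lemma bQ_mul_exp_neg_aQ_mul (u : ℝ) :
    bQ u * exp (-aQ u * u) = exp (-u ^ 2 / 2) / (√(2 * π) * aQ u) := by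
  rw [bQ, mul_assoc, ← exp_add, div_eq_inv_mul]
  ring_nf

lemma cQ_nonneg (u : ℝ) : 0 ≤ cQ u := by
  have hQ : 0 < √(2 * π) * gaussianQ u := mul_pos (by positivity) (gaussianQ_pos u)
  have ha : exp (-u ^ 2 / 2) / (√(2 * π) * gaussianQ u) ≤ aQ u := le_max_left _ _
  rw [div_le_iff₀ hQ] at ha
  rw [cQ, bQ_mul_exp_neg_aQ_mul, sub_nonneg, div_le_iff₀ (mul_pos (by positivity) (aQ_pos u))]
  linarith

lemma aQ_mul_bQ_mul_exp (u t : ℝ) : aQ u * bQ u * exp (-aQ u * t) =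
    gaussianPDFReal 0 1 t * exp ((t - u) * (t - (2 * aQ u - u)) / 2) := by
  have ha := (aQ_pos u).ne'
  rw [gaussianPDFReal_zero_one, bQ, mul_assoc _ (exp _), ← exp_add, mul_assoc (aQ u),
    mul_assoc _ (exp _), ← exp_add, show aQ u * u - u ^ 2 / 2 + -aQ u * t =
      -t ^ 2 / 2 + (t - u) * (t - (2 * aQ u - u)) / 2 by ring]
  field_simp

theorem gaussianQ_le_bQ_mul_exp_add_cQ (u ω : ℝ) :
    gaussianQ ω ≤ bQ u * exp (-aQ u * ω) + cQ u := by
  set g : ℝ → ℝ := fun t => aQ u * bQ u * exp (-aQ u * t) - gaussianPDFReal 0 1 t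
  have ha := aQ_pos u
  have hg_int (x : ℝ) : IntegrableOn g (Ioi x) :=
    ((integrableOn_exp_mul_Ioi (neg_neg_of_pos ha) x).const_mul _).sub
      (integrable_gaussianPDFReal 0 1).integrableOn
  have hg_tail (x : ℝ) : ∫ t in Ioi x, g t = bQ u * exp (-aQ u * x) - gaussianQ x := by
    rw [integral_sub ((integrableOn_exp_mul_Ioi (neg_neg_of_pos ha) x).const_mul _)
      (integrable_gaussianPDFReal 0 1).integrableOn, integral_const_mul,
      integral_Ioi_exp_neg_mul ha, gaussianQ_eq_setIntegral_gaussianPDFReal]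
    field_simp
  have hg_eq (t : ℝ) : g t =
      gaussianPDFReal 0 1 t * (exp ((t - u) * (t - (2 * aQ u - u)) / 2) - 1) := by
    simp only [g, aQ_mul_bQ_mul_exp]
    ring
  have hpdf (t : ℝ) := (gaussianPDFReal_pos 0 1 t one_ne_zero).le
  have hu := le_aQ u
  have h_left (t : ℝ) (ht : t ≤ u) : 0 ≤ g t := by
    rw [hg_eq]
    exact mul_nonneg (hpdf t) (sub_nonneg.2 (one_le_exp_iff.2 (by nlinarith)))
  have h_mid (t : ℝ) (ht : t ∈ Icc u (2 * aQ u - u)) : g t ≤ 0 := by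
    rw [hg_eq]
    exact mul_nonpos_of_nonneg_of_nonpos (hpdf t)
      (sub_nonpos.2 (exp_le_one_iff.2 (by nlinarith [ht.1, ht.2])))
  have h_right (t : ℝ) (ht : t ≥ 2 * aQ u - u) : 0 ≤ g t := by
    rw [hg_eq]
    exact mul_nonneg (hpdf t) (sub_nonneg.2 (one_le_exp_iff.2 (by nlinarith)))
  have key := min_setIntegral_Ioi_le_setIntegral_Ioi hg_int h_left h_mid h_right ω
  have hc := cQ_nonneg u
  rw [cQ] at hc ⊢
  rw [hg_tail, hg_tail, min_eq_left (by linarith)] at key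
  linarith

/-- paper's Lemma 3, lower bound: for every `ω̂ ∈ ℝ` and every `ω ∈ ℝ`,
`Q(ω) ≥ 1 − b(−ω̂) e^{a(−ω̂)ω} − c(−ω̂)`, with equality at `ω = ω̂`. -/
theorem statement5 (w0 : ℝ) :
    (∀ ω : ℝ, 1 - bQ (-w0) * Real.exp (aQ (-w0) * ω) - cQ (-w0) ≤ gaussianQ ω) ∧
    gaussianQ w0 = 1 - bQ (-w0) * Real.exp (aQ (-w0) * w0) - cQ (-w0) := by
  refine ⟨fun ω => ?_, ?_⟩
  · have h := gaussianQ_le_bQ_mul_exp_add_cQ (-w0) (-ω)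
    rw [neg_mul_neg] at h
    linarith [gaussianQ_add_gaussianQ_neg ω]
  · rw [cQ, neg_mul_neg]
    linarith [gaussianQ_add_gaussianQ_neg w0]
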